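/- Let A be a symmetric real n×n matrix with spectral spread ρ = λ₁ − λₙ and let γ > 0, β ≥ 2(1+γ)ρn. Then for every z ∈ ℝⁿ with ‖z‖₂ = 1 and min_k z_k² ≤ (n−1)/(4n²), there exists v ∈ ℝⁿ with ‖v‖₂ = 1, vᵀz = 0, and vᵀAv − zᵀAz + 6β Σₖ z_k² v_k² − 2β Σₖ z_k⁴ ≤ −γρ. -/

import Mathlib

/-!
Let `z₀² = z_k²` be the smallest squared coordinate of `z`, and take for `v` the normalized
projection of the basis vector `e_k` onto the tangent space `zᗮ`. Then
`(1 - z₀²) ∑ z_j² v_j² = z₀² (1 - 2 z₀² + ‖z‖₄⁴)`, and since `‖z‖₄⁴ ≥ 1/n` while `z₀²` is at most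
`(n - 1)/(4n²)`, this gives `12 n ∑ z_j² v_j² ≤ 4 n ‖z‖₄⁴ - 1`. The quartic part of the form is
therefore at most `-β/(2n) ≤ -(1 + γ) ρ`, while the quadratic part `vᵀAv - zᵀAz` is at most `ρ`
by the Rayleigh bounds.
-/

open Matrix Finset

section ConvexCombination

variable {ι : Type*} [Fintype ι] {f p : ι → ℝ}

lemma iInf_le_sum_mul (hp : ∀ i, 0 ≤ p i) (hp1 : ∑ i, p i = 1) :
    ⨅ i, f i ≤ ∑ i, p i * f i :=
  calc ⨅ i, f i = ∑ i, p i * ⨅ i, f i := by rw [← sum_mul, hp1, one_mul]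
    _ ≤ _ := sum_le_sum fun i _ =>
      mul_le_mul_of_nonneg_left (ciInf_le (Set.finite_range f).bddBelow i) (hp i)

lemma sum_mul_le_iSup (hp : ∀ i, 0 ≤ p i) (hp1 : ∑ i, p i = 1) :
    ∑ i, p i * f i ≤ ⨆ i, f i :=
  calc ∑ i, p i * f i ≤ ∑ i, p i * ⨆ i, f i := sum_le_sum fun i _ =>
        mul_le_mul_of_nonneg_left (le_ciSup (Set.finite_range f).bddAbove i) (hp i)
    _ = ⨆ i, f i := by rw [← sum_mul, hp1, one_mul]

end ConvexCombination

section Rayleigh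

variable {ι : Type*} [Fintype ι] [DecidableEq ι] {A : Matrix ι ι ℝ}

lemma Matrix.sum_sq_transpose_mulVec_of_mem_unitaryGroup {U : Matrix ι ι ℝ}
    (hU : U ∈ unitaryGroup ι ℝ) (w : ι → ℝ) : ∑ i, (Uᵀ *ᵥ w) i ^ 2 = ∑ i, w i ^ 2 := by
  have hUU : U * Uᵀ = 1 := mem_unitaryGroup_iff.mp hU
  have h : (Uᵀ *ᵥ w) ⬝ᵥ (Uᵀ *ᵥ w) = w ⬝ᵥ w := by
    rw [dotProduct_mulVec, ← mulVec_transpose, transpose_transpose, mulVec_mulVec, hUU,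
      one_mulVec]
  simpa only [dotProduct, sq] using h

lemma Matrix.IsHermitian.dotProduct_mulVec_self_eq_sum (hA : A.IsHermitian) (w : ι → ℝ) :
    w ⬝ᵥ A *ᵥ w =
      ∑ i, ((hA.eigenvectorUnitary : Matrix ι ι ℝ)ᵀ *ᵥ w) i ^ 2 * hA.eigenvalues i := by
  set U : Matrix ι ι ℝ := (hA.eigenvectorUnitary : Matrix ι ι ℝ)
  have hA' : A = U * diagonal hA.eigenvalues * Uᵀ := by
    conv_lhs => rw [hA.spectral_theorem]
    rfl
  conv_lhs => rw [hA', ← mulVec_mulVec, ← mulVec_mulVec, dotProduct_mulVec, ← mulVec_transpose]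
  simp only [dotProduct, mulVec_diagonal]
  exact sum_congr rfl fun i _ => by ring

lemma Matrix.IsHermitian.iInf_eigenvalues_le_dotProduct_mulVec (hA : A.IsHermitian)
    {w : ι → ℝ} (hw : ∑ i, w i ^ 2 = 1) : ⨅ i, hA.eigenvalues i ≤ w ⬝ᵥ A *ᵥ w := by
  rw [hA.dotProduct_mulVec_self_eq_sum]
  exact iInf_le_sum_mul (fun i => sq_nonneg _)
    ((sum_sq_transpose_mulVec_of_mem_unitaryGroup hA.eigenvectorUnitary.2 w).trans hw)

lemma Matrix.IsHermitian.dotProduct_mulVec_le_iSup_eigenvalues (hA : A.IsHermitian)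
    {w : ι → ℝ} (hw : ∑ i, w i ^ 2 = 1) : w ⬝ᵥ A *ᵥ w ≤ ⨆ i, hA.eigenvalues i := by
  rw [hA.dotProduct_mulVec_self_eq_sum]
  exact sum_mul_le_iSup (fun i => sq_nonneg _)
    ((sum_sq_transpose_mulVec_of_mem_unitaryGroup hA.eigenvectorUnitary.2 w).trans hw)

end Rayleigh

section Tangent

variable {ι : Type*} [DecidableEq ι]

def tangentProjSingle (z : ι → ℝ) (k : ι) : ι → ℝ := Pi.single k 1 - z k • z

lemma tangentProjSingle_apply (z : ι → ℝ) (k j : ι) :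
    tangentProjSingle z k j = (if j = k then 1 else 0) - z k * z j := by
  simp [tangentProjSingle, Pi.single_apply]

variable [Fintype ι] {z : ι → ℝ}

lemma sum_sq_tangentProjSingle (hz : ∑ j, z j ^ 2 = 1) (k : ι) :
    ∑ j, tangentProjSingle z k j ^ 2 = 1 - z k ^ 2 := by
  simp only [tangentProjSingle_apply, sub_sq, ite_pow, one_pow, ne_eq, OfNat.ofNat_ne_zero,
    not_false_eq_true, zero_pow, mul_ite, mul_one, mul_zero, ite_mul, zero_mul, mul_pow,
    sum_add_distrib, sum_sub_distrib, sum_ite_eq', mem_univ, ↓reduceIte, ← mul_sum, hz]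
  ring

lemma sum_tangentProjSingle_mul (hz : ∑ j, z j ^ 2 = 1) (k : ι) :
    ∑ j, tangentProjSingle z k j * z j = 0 := by
  simp [tangentProjSingle_apply, sub_mul, sum_sub_distrib, ← mul_sum, hz, mul_assoc, ← sq]

lemma sum_sq_mul_sq_tangentProjSingle (k : ι) :
    ∑ j, z j ^ 2 * tangentProjSingle z k j ^ 2 =
      z k ^ 2 * (1 - 2 * z k ^ 2 + ∑ j, z j ^ 4) := by
  simp only [tangentProjSingle_apply, sub_sq, ite_pow, one_pow, ne_eq, OfNat.ofNat_ne_zero,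
    not_false_eq_true, zero_pow, mul_ite, mul_one, mul_zero, ite_mul, zero_mul, mul_pow, mul_add,
    mul_sub, sum_add_distrib, sum_sub_distrib, sum_ite_eq', mem_univ, ↓reduceIte]
  rw [mul_sum]
  ring_nf

lemma exists_tangent_unit_sum_sq_mul_sq (hz : ∑ j, z j ^ 2 = 1) {k : ι} (hk : z k ^ 2 < 1) :
    ∃ v : ι → ℝ, ∑ j, v j ^ 2 = 1 ∧ ∑ j, v j * z j = 0 ∧
      (1 - z k ^ 2) * ∑ j, z j ^ 2 * v j ^ 2 = z k ^ 2 * (1 - 2 * z k ^ 2 + ∑ j, z j ^ 4) := by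
  set c := (Real.sqrt (1 - z k ^ 2))⁻¹
  have hc : c ^ 2 * (1 - z k ^ 2) = 1 := by
    rw [inv_pow, Real.sq_sqrt (sub_nonneg.2 hk.le), inv_mul_cancel₀ (sub_pos.2 hk).ne']
  refine ⟨c • tangentProjSingle z k, ?_, ?_, ?_⟩
  · simp only [Pi.smul_apply, smul_eq_mul, mul_pow, ← mul_sum, sum_sq_tangentProjSingle hz, hc]
  · simp only [Pi.smul_apply, smul_eq_mul, mul_assoc, ← mul_sum, sum_tangentProjSingle_mul hz,
      mul_zero]
  · have hcS : ∑ j, z j ^ 2 * (c • tangentProjSingle z k) j ^ 2 =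
        c ^ 2 * ∑ j, z j ^ 2 * tangentProjSingle z k j ^ 2 := by
      simp only [Pi.smul_apply, smul_eq_mul, mul_sum]
      exact sum_congr rfl fun j _ => by ring
    rw [hcS, sum_sq_mul_sq_tangentProjSingle, ← mul_assoc, mul_comm (1 - _), hc, one_mul]

end Tangent

lemma twelve_mul_le_four_mul_sub_one {n a Q S : ℝ} (ha : 0 ≤ a) (han : 4 * n ^ 2 * a ≤ n - 1)
    (hQ : 1 ≤ n * Q) (hS : (1 - a) * S = a * (1 - 2 * a + Q)) :
    12 * n * S ≤ 4 * n * Q - 1 := by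
  have hn : 1 ≤ n := by nlinarith
  have ha4 : 4 * a ≤ 1 := by nlinarith
  -- `n` times the gap is `4n(nQ - 1)(1 - 4a) + 3(n(1 - 4na) - 1) + 24(na - 5/16)² + 21/32`.
  have hgap : 0 ≤ n * ((4 * n * Q - 1) * (1 - a) - 12 * n * (a * (1 - 2 * a + Q))) := by
    nlinarith [mul_nonneg (mul_nonneg (by linarith : (0 : ℝ) ≤ n) (sub_nonneg.2 hQ))
      (sub_nonneg.2 ha4), sq_nonneg (n * a - 5 / 16)]
  have hgap' := nonneg_of_mul_nonneg_right hgap (by linarith)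
  nlinarith [(by linarith : 0 < 1 - a)]

theorem stmt12 {n : ℕ} (hn : 2 ≤ n) (A : Matrix (Fin n) (Fin n) ℝ) (hA : A.IsHermitian)
    (γ β ρ : ℝ) (hγ : 0 < γ)
    (hρ : ρ = (⨆ i, hA.eigenvalues i) - (⨅ i, hA.eigenvalues i))
    (hβ : 2 * (1 + γ) * ρ * n ≤ β)
    (z : Fin n → ℝ) (hz : ∑ k, z k ^ 2 = 1)
    (hz0 : (⨅ k, z k ^ 2) ≤ ((n : ℝ) - 1) / (4 * (n : ℝ) ^ 2)) :
    ∃ v : Fin n → ℝ, ∑ k, v k ^ 2 = 1 ∧ ∑ k, v k * z k = 0 ∧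
      v ⬝ᵥ A.mulVec v - z ⬝ᵥ A.mulVec z
        + 6 * β * ∑ k, z k ^ 2 * v k ^ 2 - 2 * β * ∑ k, z k ^ 4 ≤ -(γ * ρ) := by
  have hn' : (2 : ℝ) ≤ n := by exact_mod_cast hn
  have : Nonempty (Fin n) := ⟨⟨0, by omega⟩⟩
  obtain ⟨k, hk⟩ := exists_eq_ciInf_of_finite (f := fun k => z k ^ 2)
  have hzk : 4 * (n : ℝ) ^ 2 * z k ^ 2 ≤ n - 1 := by
    rw [← hk, le_div_iff₀ (by positivity)] at hz0
    linarith
  have hQ : 1 ≤ (n : ℝ) * ∑ k, z k ^ 4 := by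
    have h := sq_sum_le_card_mul_sum_sq (s := univ) (f := fun k => z k ^ 2)
    simp only [hz, one_pow, card_univ, Fintype.card_fin, ← pow_mul] at h
    exact h
  obtain ⟨v, hv, hvz, hS⟩ := exists_tangent_unit_sum_sq_mul_sq hz (k := k) (by nlinarith)
  have hkey := twelve_mul_le_four_mul_sub_one (sq_nonneg _) hzk hQ hS
  have hzA := hA.iInf_eigenvalues_le_dotProduct_mulVec hz
  have hquad : v ⬝ᵥ A *ᵥ v - z ⬝ᵥ A *ᵥ z ≤ ρ := by
    linarith [hA.dotProduct_mulVec_le_iSup_eigenvalues hv]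
  have hρ0 : 0 ≤ ρ := by linarith [hA.dotProduct_mulVec_le_iSup_eigenvalues hz]
  have hβ0 : 0 ≤ β := le_trans (by positivity) hβ
  refine ⟨v, hv, hvz, ?_⟩
  nlinarith [mul_le_mul_of_nonneg_left hkey hβ0]
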